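/- Let K ≥ 2 be an integer and N > 0, γ ∈ [0,1] real, and let H_m = ∑_{k=1}^{m} 1/k (H_0 := 0). Define f_a(L, d) := [K(K−L+2)(K−L+1)·d + K·N·γ·(K+1)(K−L+1)]/[(K−L+2)·L + (K+1)(K−L+1)·H_{K−L}] + K·N·(1−γ), and for 1 ≤ L ≤ K define the point Q_L = (x(L), y(L)) with x(L) := N·γ·(K−L)/((L+1)·H_L) and y(L) := K·N·γ/H_L + K·N·(1−γ). Then for every L with 2 ≤ L ≤ K, the affine function d ↦ f_a(K+1−L, d) passes through both Q_L and Q_{L−1}; that is, f_a(K+1−L, x(L)) = y(L) and f_a(K+1−L, x(L−1)) = y(L−1). -/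
import Mathlib


/-- The m-th harmonic number `H_m = ∑_{k=1}^m 1/k` (so `H_0 = 0`). -/
noncomputable def harmonic' (m : ℕ) : ℝ := ∑ k ∈ Finset.Icc 1 m, (1 : ℝ) / (k : ℝ)

/-- `f_a(L, d)` from equation (11) of the paper. -/
noncomputable def fa (K : ℕ) (N γ : ℝ) (L : ℕ) (d : ℝ) : ℝ :=
  ((K : ℝ) * ((K : ℝ) - (L : ℝ) + 2) * ((K : ℝ) - (L : ℝ) + 1) * d +
      (K : ℝ) * N * γ * ((K : ℝ) + 1) * ((K : ℝ) - (L : ℝ) + 1)) /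
    (((K : ℝ) - (L : ℝ) + 2) * (L : ℝ) +
      ((K : ℝ) + 1) * ((K : ℝ) - (L : ℝ) + 1) * harmonic' (K - L)) +
  (K : ℝ) * N * (1 - γ)

/-- First coordinate (multicast DoF) of the point `Q_L` (equation (14)). -/
noncomputable def QLx (K : ℕ) (N γ : ℝ) (L : ℕ) : ℝ :=
  N * γ * ((K : ℝ) - (L : ℝ)) / (((L : ℝ) + 1) * harmonic' L)

/-- Second coordinate (sum DoF) of the point `Q_L` (equation (14)). -/
noncomputable def QLy (K : ℕ) (N γ : ℝ) (L : ℕ) : ℝ :=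
  (K : ℝ) * N * γ / harmonic' L + (K : ℝ) * N * (1 - γ)

lemma harmonic'_pos {m : ℕ} (hm : 1 ≤ m) : 0 < harmonic' m := by
  unfold harmonic'
  apply Finset.sum_pos
  · intro k hk
    simp only [Finset.mem_Icc] at hk
    have : (0:ℝ) < (k:ℝ) := by exact_mod_cast hk.1
    positivity
  · exact ⟨1, by simp [Finset.mem_Icc, hm]⟩

lemma harmonic'_succ (m : ℕ) : harmonic' (m + 1) = harmonic' m + 1 / ((m : ℝ) + 1) := by
  unfold harmonic'
  rw [Finset.sum_Icc_succ_top (by omega : 1 ≤ m + 1)]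
  push_cast
  ring

theorem fa_through_QL
    (K : ℕ) (hK : 2 ≤ K) (N γ : ℝ) (hN : 0 < N) (hγ0 : 0 ≤ γ) (hγ1 : γ ≤ 1) :
    ∀ L : ℕ, 2 ≤ L → L ≤ K →
      fa K N γ (K + 1 - L) (QLx K N γ L) = QLy K N γ L ∧
      fa K N γ (K + 1 - L) (QLx K N γ (L - 1)) = QLy K N γ (L - 1) := by
  intro L hL2 hLK
  obtain ⟨m, rfl⟩ : ∃ m, L = m + 1 := ⟨L - 1, by omega⟩
  have hm1 : 1 ≤ m := by omega
  have hmK : m ≤ K := by omega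
  have hKL : K + 1 - (m + 1) = K - m := by omega
  have hKm : K - (K - m) = m := by omega
  have hsub : m + 1 - 1 = m := by omega
  have hcast : ((K - m : ℕ) : ℝ) = (K : ℝ) - (m : ℝ) := by
    push_cast [Nat.cast_sub hmK]; ring
  have hHpos : 0 < harmonic' m := harmonic'_pos hm1
  have hH1 : harmonic' (m + 1) = harmonic' m + 1 / ((m : ℝ) + 1) := harmonic'_succ m
  have hmpos : (0 : ℝ) < (m : ℝ) := by exact_mod_cast hm1
  have hKmR : (1 : ℝ) ≤ (K : ℝ) - (m : ℝ) := by
    have : (m : ℝ) + 1 ≤ (K : ℝ) := by exact_mod_cast (by omega : m + 1 ≤ K)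
    linarith
  have hH1pos : 0 < harmonic' (m + 1) := harmonic'_pos (by omega)
  have hD : 0 < ((K : ℝ) - ((K : ℝ) - (m : ℝ)) + 2) * ((K : ℝ) - (m : ℝ)) +
      ((K : ℝ) + 1) * ((K : ℝ) - ((K : ℝ) - (m : ℝ)) + 1) * harmonic' m := by
    have h1 : (0 : ℝ) < ((K : ℝ) - ((K : ℝ) - (m : ℝ)) + 2) * ((K : ℝ) - (m : ℝ)) := by
      nlinarith
    have h2 : (0 : ℝ) ≤ ((K : ℝ) + 1) * ((K : ℝ) - ((K : ℝ) - (m : ℝ)) + 1) * harmonic' m := by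
      have hK0 : (0 : ℝ) ≤ (K : ℝ) := Nat.cast_nonneg K
      exact mul_nonneg (mul_nonneg (by linarith) (by linarith)) hHpos.le
    linarith
  rw [hKL, hsub]
  unfold fa QLx QLy
  rw [hKm, hcast, hH1]
  set H := harmonic' m with hH
  have hHp : (0:ℝ) < H + 1 / ((m : ℝ) + 1) := by positivity
  constructor
  · push_cast
    rw [add_left_inj, div_eq_div_iff (ne_of_gt hD) (ne_of_gt hHp)]
    field_simp
    ring
  · push_cast
    rw [add_left_inj, div_eq_div_iff (ne_of_gt hD) (ne_of_gt hHpos)]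
    field_simp
    ring
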